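/- Let λ ∈ (0,1) and θ ∈ (0,∞) with θ ≠ 1/2 and θ ≠ 1. Let c be the unique zero of f(c) = (c/((2θ−1+2cθ)(2−2θ−c(2θ−1))))^((1−θ)/(θ−1/2)) − (2θ−1+2cθ)²/(1−λ) in I(θ), set s̄ = (c/((2θ−1+2cθ)(2−2θ−c(2θ−1))))^(1/(2θ−1)), and define g(s) = (−cs + (2θ−1+2cθ)s^(2θ))/(s − (2−2θ−c(2θ−1))s^(2θ)). Then for every s in the closed interval with endpoints 1 and s̄, the derivative satisfies g'(s) > 0, and g(s) lies in the closed interval with endpoints 1 and (1−λ)s̄. -/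

import Mathlib

/-!
Write `a = 2θ - 1 + 2cθ`, `b = 2 - 2θ - c(2θ - 1)` and `p = 2θ`, so that `a + b = 1 + c` and
`g s = (-c s + a s^p) / (s - b s^p)`. The quotient rule gives
`g' s = (p - 1)(a - cb) s^p / (s - b s^p)^2`, and `(2θ - 1)(a - cb) = ((2θ - 1)(1 + c))^2 > 0`.
Membership `c ∈ I(θ)` gives `cθ > 1 - θ` (hence `a > 1`, `c > -1`) and `cb > 0`, so
`k = c/(ab) > 0` and `s̄ = k^{1/(2θ-1)}`. The denominator is `s (1 - b s^{2θ-1})`, and for `s`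
between `1` and `s̄` the affine quantity `1 - b s^{2θ-1}` lies between `1 - b = a - c` and
`1 - bk = (a - c)/a`, which have the same sign. Hence `g` increases strictly from `g 1 = 1`
to `g s̄ = a² k`, and `f c = 0` says exactly that `(1 - λ) s̄ = a² k`.
-/

open Real

/-- The interval `I(θ)` in which the root `c` of `f` is located. -/
noncomputable def noTradeInterval (θ : ℝ) : Set ℝ :=
  if θ < 1/2 then Set.Ioi ((1 - θ)/θ)
  else if θ < 1 then Set.Ioo ((1 - θ)/θ) ((1 - θ)/(θ - 1/2))
  else Set.Ioo ((1 - θ)/θ) 0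

open Set

noncomputable def powRatio (a b c p s : ℝ) : ℝ :=
  (-c * s + a * s ^ p) / (s - b * s ^ p)

theorem lt_of_mem_noTradeInterval {θ c : ℝ} (hc : c ∈ noTradeInterval θ) :
    (1 - θ) / θ < c := by
  unfold noTradeInterval at hc
  split_ifs at hc
  exacts [hc, hc.1, hc.1]

theorem mul_pos_of_mem_noTradeInterval {θ c : ℝ} (hθ : 0 < θ) (hθhalf : θ ≠ 1/2)
    (hθone : θ ≠ 1) (hc : c ∈ noTradeInterval θ) : 0 < c * (2 - 2*θ - c*(2*θ - 1)) := by
  have hcθ : 1 - θ < c * θ := (div_lt_iff₀ hθ).mp (lt_of_mem_noTradeInterval hc)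
  unfold noTradeInterval at hc
  split_ifs at hc with h₁ h₂
  · have hc1 : 1 < c := by nlinarith
    have hb : 0 < 2 - 2*θ - c*(2*θ - 1) := by nlinarith
    positivity
  · have hθ' : 1/2 < θ := lt_of_le_of_ne (not_lt.mp h₁) (Ne.symm hθhalf)
    have hc0 : 0 < c := by nlinarith
    have hb : c * (θ - 1/2) < 1 - θ := (lt_div_iff₀ (by linarith)).mp hc.2
    nlinarith
  · have hθ' : 1 < θ := lt_of_le_of_ne (not_lt.mp h₂) (Ne.symm hθone)
    nlinarith [hc.2]

theorem mul_rpow_eq_of_rpow_sub_div_eq_zero {θ k ℓ m : ℝ} (hk : 0 < k) (hθhalf : θ ≠ 1/2)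
    (hℓ : ℓ ≠ 0) (h : k ^ ((1 - θ)/(θ - 1/2)) - m / ℓ = 0) :
    ℓ * k ^ (1/(2*θ - 1)) = m * k := by
  have hq : 2*θ - 1 ≠ 0 := by contrapose! hθhalf; linarith
  have hexp : (1 - θ)/(θ - 1/2) = 1/(2*θ - 1) - 1 := by
    rw [div_sub_one hq, div_eq_div_iff (by contrapose! hθhalf; linarith) hq]
    ring
  rw [hexp, rpow_sub_one hk.ne', sub_eq_zero, div_eq_div_iff hk.ne' hℓ] at h
  linarith

theorem rpow_mem_uIcc {x y z : ℝ} (p : ℝ) (hx : 0 < x) (hy : 0 < y) (hz : z ∈ uIcc x y) :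
    z ^ p ∈ uIcc (x ^ p) (y ^ p) := by
  have hpos : uIcc x y ⊆ Ioi 0 := fun t ht => (lt_min hx hy).trans_le ht.1
  rcases le_or_gt 0 p with hp | hp
  · exact ((monotoneOn_rpow_Ici_of_exponent_nonneg hp).mono
      (hpos.trans Ioi_subset_Ici_self)).mapsTo_uIcc hz
  · exact ((antitoneOn_rpow_Ioi_of_exponent_nonpos hp.le).mono hpos).mapsTo_uIcc hz

theorem one_sub_mul_ne_zero_of_mem_uIcc {b k u : ℝ} (hu : u ∈ uIcc 1 k)
    (h : 0 < (1 - b) * (1 - b * k)) : 1 - b * u ≠ 0 := by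
  have hmem : 1 - b * u ∈ uIcc (1 - b * 1) (1 - b * k) := by
    rcases le_total 0 b with hb | hb
    · exact (show Antitone fun x => 1 - b * x from fun x y hxy => by nlinarith).mapsTo_uIcc hu
    · exact (show Monotone fun x => 1 - b * x from fun x y hxy => by nlinarith).mapsTo_uIcc hu
  rw [mul_one] at hmem
  intro h0
  rw [h0, mem_uIcc] at hmem
  rcases hmem with ⟨h₁, h₂⟩ | ⟨h₁, h₂⟩ <;> nlinarith

section powRatio

variable {a b c p : ℝ}

theorem hasDerivAt_powRatio {s : ℝ} (hs : 0 < s) (hD : s - b * s ^ p ≠ 0) :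
    HasDerivAt (powRatio a b c p) ((p - 1) * (a - c * b) * s ^ p / (s - b * s ^ p) ^ 2) s := by
  have hpow := hasDerivAt_rpow_const (p := p) (Or.inl hs.ne')
  have hN := ((hasDerivAt_id' s).const_mul (-c)).fun_add (hpow.const_mul a)
  have hD' := (hasDerivAt_id' s).fun_sub (hpow.const_mul b)
  refine (hN.div hD' hD).congr_deriv ?_
  rw [rpow_sub_one hs.ne']
  field_simp
  ring

theorem powRatio_one (hab : a + b = 1 + c) (hb : b ≠ 1) : powRatio a b c p 1 = 1 := by
  rw [powRatio, one_rpow, div_eq_one_iff_eq (by simpa [sub_eq_zero] using hb.symm)]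
  linarith

theorem powRatio_eq_of_rpow_sub_one_eq {k s : ℝ} (hs : 0 < s) (hsk : s ^ (p - 1) = k)
    (hab : a + b = 1 + c) (hac : a ≠ c) (habk : a * b * k = c) :
    powRatio a b c p s = a ^ 2 * k := by
  have hsp : s ^ p = s * k := by
    rw [← hsk, rpow_sub_one hs.ne']; field_simp
  have hbk : 1 - b * k ≠ 0 := by
    intro h; apply hac; linear_combination a * h + habk
  have hD : s - b * (s * k) ≠ 0 := by
    rw [show s - b * (s * k) = s * (1 - b * k) by ring]; positivity
  rw [powRatio, hsp, div_eq_iff hD]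
  linear_combination (a * k * s + s) * habk - a * k * s * hab

theorem sub_mul_rpow_ne_zero {k s : ℝ} (ha : 0 < a) (hab : a + b = 1 + c) (hac : a ≠ c)
    (habk : a * b * k = c) (hs : 0 < s) (hsk : s ^ (p - 1) ∈ uIcc 1 k) : s - b * s ^ p ≠ 0 := by
  have hends : 0 < (1 - b) * (1 - b * k) := by
    have h₁ : 1 - b = a - c := by linarith
    have h₂ : 1 - b * k = (a - c) / a := by field_simp; linarith
    rw [h₁, h₂, ← mul_div_assoc]
    exact div_pos (mul_self_pos.mpr (sub_ne_zero.mpr hac)) ha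
  rw [show s - b * s ^ p = s * (1 - b * s ^ (p - 1)) by rw [rpow_sub_one hs.ne']; field_simp]
  exact mul_ne_zero hs.ne' (one_sub_mul_ne_zero_of_mem_uIcc hsk hends)

theorem powRatio_deriv_pos_and_mem_uIcc {k sbar : ℝ} (ha : 0 < a) (hab : a + b = 1 + c)
    (hac : a ≠ c) (habk : a * b * k = c) (hsbar : 0 < sbar) (hsbark : sbar ^ (p - 1) = k)
    (hpos : 0 < (p - 1) * (a - c * b)) :
    ∀ s ∈ uIcc 1 sbar,
      0 < deriv (powRatio a b c p) s ∧ powRatio a b c p s ∈ uIcc 1 (a ^ 2 * k) := by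
  have hderiv : ∀ s ∈ uIcc 1 sbar,
      DifferentiableAt ℝ (powRatio a b c p) s ∧ 0 < deriv (powRatio a b c p) s := by
    intro s hs
    have hs0 : 0 < s := (lt_min one_pos hsbar).trans_le hs.1
    have hsk : s ^ (p - 1) ∈ uIcc 1 k := by
      simpa [hsbark] using rpow_mem_uIcc (p - 1) one_pos hsbar hs
    have hD := sub_mul_rpow_ne_zero ha hab hac habk hs0 hsk
    have h := hasDerivAt_powRatio (a := a) (c := c) hs0 hD
    exact ⟨h.differentiableAt, h.deriv ▸ by positivity⟩
  have hmono : StrictMonoOn (powRatio a b c p) (uIcc 1 sbar) :=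
    strictMonoOn_of_deriv_pos (convex_uIcc 1 sbar)
      (fun s hs => (hderiv s hs).1.continuousAt.continuousWithinAt)
      fun s hs => (hderiv s (interior_subset hs)).2
  intro s hs
  refine ⟨(hderiv s hs).2, ?_⟩
  have := hmono.monotoneOn.mapsTo_uIcc hs
  rwa [powRatio_one hab (by contrapose! hac; linarith),
    powRatio_eq_of_rpow_sub_one_eq hsbar hsbark hab hac habk] at this

end powRatio

theorem growth_optimal_g_monotone_and_range
    (lam θ c sbar : ℝ) (g : ℝ → ℝ)
    (hlam : lam ∈ Set.Ioo (0:ℝ) 1) (hθ : 0 < θ) (hθhalf : θ ≠ 1/2) (hθone : θ ≠ 1)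
    (hcI : c ∈ noTradeInterval θ)
    (hfc : (c / ((2*θ - 1 + 2*c*θ) * (2 - 2*θ - c*(2*θ - 1)))) ^ ((1 - θ)/(θ - 1/2))
        - (2*θ - 1 + 2*c*θ)^2 / (1 - lam) = 0)
    (hsbar : sbar = (c / ((2*θ - 1 + 2*c*θ) * (2 - 2*θ - c*(2*θ - 1)))) ^ (1/(2*θ - 1)))
    (hg : ∀ s : ℝ, g s = (-c*s + (2*θ - 1 + 2*c*θ) * s ^ (2*θ))
        / (s - (2 - 2*θ - c*(2*θ - 1)) * s ^ (2*θ))) :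
    ∀ s ∈ Set.uIcc (1:ℝ) sbar,
      0 < deriv g s ∧ g s ∈ Set.uIcc (1:ℝ) ((1 - lam) * sbar) := by
  set a := 2*θ - 1 + 2*c*θ
  set b := 2 - 2*θ - c*(2*θ - 1)
  set k := c / (a * b) with hk_def
  have hcθ : 1 - θ < c * θ := (div_lt_iff₀ hθ).mp (lt_of_mem_noTradeInterval hcI)
  have hc : 0 < 1 + c := by nlinarith
  have hq : 2*θ - 1 ≠ 0 := by contrapose! hθhalf; linarith
  have ha : 0 < a := by linarith
  have hac : a ≠ c := fun h => mul_ne_zero hq hc.ne' (by linear_combination h)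
  have hcb : 0 < c * b := mul_pos_of_mem_noTradeInterval hθ hθhalf hθone hcI
  have hb : b ≠ 0 := right_ne_zero_of_mul hcb.ne'
  have habk : a * b * k = c := by rw [hk_def]; field_simp
  have hk : 0 < k := by
    rw [show k = c * b / (a * b ^ 2) by rw [hk_def]; field_simp]
    positivity
  have hsbark : sbar ^ (2*θ - 1) = k := by rw [hsbar, one_div, rpow_inv_rpow hk.le hq]
  have hlam_sbar : (1 - lam) * sbar = a ^ 2 * k :=
    hsbar ▸ mul_rpow_eq_of_rpow_sub_div_eq_zero hk hθhalf (by linarith [hlam.2]) hfc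
  rw [show g = powRatio a b c (2*θ) from funext hg, hlam_sbar]
  refine powRatio_deriv_pos_and_mem_uIcc ha (by ring) hac habk ?_ hsbark ?_
  · exact hsbar ▸ rpow_pos_of_pos hk _
  · rw [show (2*θ - 1) * (a - c * b) = ((2*θ - 1) * (1 + c)) ^ 2 by ring]
    positivity
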